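/- arXiv:1308.2910 — 3 statements merged into one kernel-verified Lean document; each statement's English description precedes it below -/
import Mathlib

section
/- Suppose C > 0 and the trace-type inequality ‖T u‖² ≤ C² q(u) holds for all u ∈ V. Then for every u ∈ V, every ε > 0 and every α ∈ ℝ, the Nitsche quadratic form satisfies a(u) ≥ (1 − C²ε/2) q(u) + (α − 1/(2ε))‖J u‖². -/
open RealInnerProductSpace

theorem real_inner_le_inv_two_mul_sq_add {E : Type*} [NormedAddCommGroup E]
    [InnerProductSpace ℝ E] (x y : E) {ε : ℝ} (hε : 0 < ε) :
    ⟪x, y⟫ ≤ 1 / (2 * ε) * ‖x‖ ^ 2 + ε / 2 * ‖y‖ ^ 2 := by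
  have young : 2 * ε * (‖x‖ * ‖y‖) ≤ ‖x‖ ^ 2 + ε ^ 2 * ‖y‖ ^ 2 := by
    nlinarith [sq_nonneg (‖x‖ - ε * ‖y‖)]
  calc ⟪x, y⟫ ≤ ‖x‖ * ‖y‖ := real_inner_le_norm x y
    _ ≤ (‖x‖ ^ 2 + ε ^ 2 * ‖y‖ ^ 2) / (2 * ε) := by
        rw [le_div_iff₀ (by positivity)]; linarith
    _ = 1 / (2 * ε) * ‖x‖ ^ 2 + ε / 2 * ‖y‖ ^ 2 := by field_simp

theorem nitsche_lower_bound_trace_general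
    {V H : Type*}
    [NormedAddCommGroup H] [InnerProductSpace ℝ H]
    (q : V → ℝ) (J T : V → H) (α : ℝ)
    (a : V → ℝ)
    (ha : ∀ u, a u = q u + α * ‖J u‖ ^ 2 - ⟪J u, T u⟫)
    (C : ℝ)
    (htrace : ∀ u, ‖T u‖ ^ 2 ≤ C ^ 2 * q u)
    (u : V) (ε : ℝ) (hε : 0 < ε) :
    a u ≥ (1 - C ^ 2 * ε / 2) * q u + (α - 1 / (2 * ε)) * ‖J u‖ ^ 2 := by
  have young := real_inner_le_inv_two_mul_sq_add (J u) (T u) hε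
  have trace : ε / 2 * ‖T u‖ ^ 2 ≤ ε / 2 * (C ^ 2 * q u) :=
    mul_le_mul_of_nonneg_left (htrace u) (by positivity)
  rw [ha u]
  linarith

/-- Abstract Nitsche coupling form: `a u = q u + α‖J u‖² − ⟪J u, T u⟫`.
If `C > 0` and `‖T u‖² ≤ C² q u` for all `u`, then for every `u`, `ε > 0` and `α`,
`a u ≥ (1 − C²ε/2) q u + (α − 1/(2ε))‖J u‖²`. -/
theorem nitsche_lower_bound_trace
    {V H : Type*} [AddCommGroup V] [Module ℝ V]
    [NormedAddCommGroup H] [InnerProductSpace ℝ H]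
    (q : V → ℝ) (hq : ∀ u, 0 ≤ q u) (J T : V → H) (α : ℝ)
    (a : V → ℝ)
    (ha : ∀ u, a u = q u + α * ‖J u‖ ^ 2 - ⟪J u, T u⟫)
    (C : ℝ) (hC : 0 < C)
    (htrace : ∀ u, ‖T u‖ ^ 2 ≤ C ^ 2 * q u)
    (u : V) (ε : ℝ) (hε : 0 < ε) :
    a u ≥ (1 - C ^ 2 * ε / 2) * q u + (α - 1 / (2 * ε)) * ‖J u‖ ^ 2 :=
  nitsche_lower_bound_trace_general q J T α a ha C htrace u ε hε
end

section
/- Suppose C > 0 and the trace-type inequality ‖T u‖² ≤ C² q(u) holds for all u ∈ V. If the stabilisation parameter satisfies α ≥ C²/2, then for every u ∈ V one has a(u) ≥ (1/2) q(u) + (α − C²/2)‖J u‖²; in particular a(u) ≥ 0 for all u ∈ V. -/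
open RealInnerProductSpace

/-- Young's inequality `x y ≤ (c x² + y² / c) / 2`, phrased through `y² ≤ c q` so that `c = 0` is
allowed. -/
theorem mul_le_half_add_of_sq_le_mul {x y c q : ℝ} (hc : 0 ≤ c) (hq : 0 ≤ q)
    (h : y ^ 2 ≤ c * q) : x * y ≤ (c * x ^ 2 + q) / 2 := by
  refine le_of_sq_le_sq ?_ (by positivity)
  calc (x * y) ^ 2 = x ^ 2 * y ^ 2 := by ring
    _ ≤ x ^ 2 * (c * q) := mul_le_mul_of_nonneg_left h (sq_nonneg x)
    _ ≤ ((c * x ^ 2 + q) / 2) ^ 2 := by linarith [four_mul_le_sq_add (c * x ^ 2) q]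

theorem real_inner_le_half_add_of_norm_sq_le_mul {H : Type*} [NormedAddCommGroup H]
    [InnerProductSpace ℝ H] {x y : H} {c q : ℝ} (hc : 0 ≤ c) (hq : 0 ≤ q)
    (h : ‖y‖ ^ 2 ≤ c * q) : ⟪x, y⟫ ≤ (c * ‖x‖ ^ 2 + q) / 2 :=
  (real_inner_le_norm x y).trans (mul_le_half_add_of_sq_le_mul hc hq h)

theorem nitsche_coercive_lower_bound_general
    {V H : Type*} [AddCommGroup V] [Module ℝ V]
    [NormedAddCommGroup H] [InnerProductSpace ℝ H]
    (q : V → ℝ) (hq : ∀ u, 0 ≤ q u) (J T : V → H) (α : ℝ)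
    (a : V → ℝ)
    (ha : ∀ u, a u = q u + α * ‖J u‖ ^ 2 - ⟪J u, T u⟫)
    (C : ℝ)
    (htrace : ∀ u, ‖T u‖ ^ 2 ≤ C ^ 2 * q u)
    (hα : α ≥ C ^ 2 / 2) :
    (∀ u, a u ≥ (1 / 2) * q u + (α - C ^ 2 / 2) * ‖J u‖ ^ 2) ∧
    (∀ u, 0 ≤ a u) := by
  have lower_bound : ∀ u, a u ≥ (1 / 2) * q u + (α - C ^ 2 / 2) * ‖J u‖ ^ 2 := fun u => by
    have hinner := real_inner_le_half_add_of_norm_sq_le_mul (x := J u) (sq_nonneg C) (hq u)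
      (htrace u)
    rw [ha u]
    linarith
  refine ⟨lower_bound, fun u => le_trans ?_ (lower_bound u)⟩
  have hcoeff : 0 ≤ α - C ^ 2 / 2 := sub_nonneg.mpr hα
  have := hq u
  positivity

/-- Abstract Nitsche coupling form: `a u = q u + α‖J u‖² − ⟪J u, T u⟫`.
If `C > 0`, `‖T u‖² ≤ C² q u` for all `u`, and `α ≥ C²/2`, then for every `u`,
`a u ≥ (1/2) q u + (α − C²/2)‖J u‖²`; in particular `a u ≥ 0` for all `u`. -/
theorem nitsche_coercive_lower_bound
    {V H : Type*} [AddCommGroup V] [Module ℝ V]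
    [NormedAddCommGroup H] [InnerProductSpace ℝ H]
    (q : V → ℝ) (hq : ∀ u, 0 ≤ q u) (J T : V → H) (α : ℝ)
    (a : V → ℝ)
    (ha : ∀ u, a u = q u + α * ‖J u‖ ^ 2 - ⟪J u, T u⟫)
    (C : ℝ) (hC : 0 < C)
    (htrace : ∀ u, ‖T u‖ ^ 2 ≤ C ^ 2 * q u)
    (hα : α ≥ C ^ 2 / 2) :
    (∀ u, a u ≥ (1 / 2) * q u + (α - C ^ 2 / 2) * ‖J u‖ ^ 2) ∧
    (∀ u, 0 ≤ a u) :=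
  nitsche_coercive_lower_bound_general q hq J T α a ha C htrace hα
end

section
/- Suppose C > 0 and the trace-type inequality ‖T u‖² ≤ C² q(u) holds for all u ∈ V, and suppose that the combined form is nondegenerate in the sense that q(u) = 0 and J u = 0 imply u = 0. If the stabilisation parameter satisfies α > C²/2, then the Nitsche quadratic form is positive definite: a(u) > 0 for every u ≠ 0. -/
open RealInnerProductSpace

/-! Bounding `⟪J u, T u⟫ ≤ ‖J u‖ ‖T u‖ ≤ |C| ‖J u‖ √(q u)` and applying AM-GM gives the
coercivity estimate `a u ≥ q u / 2 + (α - C² / 2) ‖J u‖²`; both terms are nonnegative, and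
nondegeneracy makes one of them positive when `u ≠ 0`. -/

theorem real_inner_le_of_norm_sq_le_sq_mul {H : Type*} [NormedAddCommGroup H]
    [InnerProductSpace ℝ H] (j : H) {t : H} {s C : ℝ} (hs : 0 ≤ s)
    (ht : ‖t‖ ^ 2 ≤ C ^ 2 * s) :
    ⟪j, t⟫ ≤ (C ^ 2 * ‖j‖ ^ 2 + s) / 2 := by
  have hsq : (|C| * √s) ^ 2 = C ^ 2 * s := by rw [mul_pow, sq_abs, Real.sq_sqrt hs]
  have ht' : ‖t‖ ≤ |C| * √s :=
    (pow_le_pow_iff_left₀ (norm_nonneg t) (by positivity) two_ne_zero).mp (hsq ▸ ht)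
  calc ⟪j, t⟫ ≤ ‖j‖ * ‖t‖ := real_inner_le_norm j t
    _ ≤ ‖j‖ * (|C| * √s) := by gcongr
    _ = (|C| * ‖j‖) * √s := by ring
    _ ≤ ((|C| * ‖j‖) ^ 2 + √s ^ 2) / 2 := by linarith [two_mul_le_add_sq (|C| * ‖j‖) √s]
    _ = (C ^ 2 * ‖j‖ ^ 2 + s) / 2 := by rw [mul_pow, sq_abs, Real.sq_sqrt hs]

theorem nitsche_positive_definite_general
    {V H : Type*} [AddCommGroup V] [Module ℝ V]
    [NormedAddCommGroup H] [InnerProductSpace ℝ H]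
    (q : V → ℝ) (hq : ∀ u, 0 ≤ q u) (J T : V → H) (α : ℝ)
    (a : V → ℝ)
    (ha : ∀ u, a u = q u + α * ‖J u‖ ^ 2 - ⟪J u, T u⟫)
    (C : ℝ)
    (htrace : ∀ u, ‖T u‖ ^ 2 ≤ C ^ 2 * q u)
    (hnd : ∀ u, q u = 0 → J u = 0 → u = 0)
    (hα : α > C ^ 2 / 2) :
    ∀ u : V, u ≠ 0 → 0 < a u := by
  intro u hu
  have hcoercive : q u / 2 + (α - C ^ 2 / 2) * ‖J u‖ ^ 2 ≤ a u := by
    rw [ha]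
    linarith [real_inner_le_of_norm_sq_le_sq_mul (J u) (hq u) (htrace u)]
  have hpos : 0 < q u / 2 + (α - C ^ 2 / 2) * ‖J u‖ ^ 2 := by
    have hα' : 0 < α - C ^ 2 / 2 := sub_pos.mpr hα
    by_cases hJ : J u = 0
    · have hqu : 0 < q u := (hq u).lt_of_ne fun h => hu (hnd u h.symm hJ)
      rw [hJ, norm_zero]
      linarith
    · have hJpos : 0 < ‖J u‖ := norm_pos_iff.mpr hJ
      have hqu := hq u
      positivity
  exact hpos.trans_le hcoercive

/-- Abstract Nitsche coupling form: `a u = q u + α‖J u‖² − ⟪J u, T u⟫`.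
If `C > 0`, `‖T u‖² ≤ C² q u` for all `u`, the combined form is nondegenerate
(`q u = 0` and `J u = 0` imply `u = 0`), and `α > C²/2`, then `a` is positive
definite: `a u > 0` for every `u ≠ 0`. -/
theorem nitsche_positive_definite
    {V H : Type*} [AddCommGroup V] [Module ℝ V]
    [NormedAddCommGroup H] [InnerProductSpace ℝ H]
    (q : V → ℝ) (hq : ∀ u, 0 ≤ q u) (J T : V → H) (α : ℝ)
    (a : V → ℝ)
    (ha : ∀ u, a u = q u + α * ‖J u‖ ^ 2 - ⟪J u, T u⟫)
    (C : ℝ) (hC : 0 < C)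
    (htrace : ∀ u, ‖T u‖ ^ 2 ≤ C ^ 2 * q u)
    (hnd : ∀ u, q u = 0 → J u = 0 → u = 0)
    (hα : α > C ^ 2 / 2) :
    ∀ u : V, u ≠ 0 → 0 < a u :=
  nitsche_positive_definite_general q hq J T α a ha C htrace hnd hα
end
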